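/- For every (u,v) ∈ ℝ², let N(u,v) be the 4×4 real matrix with rows (0, 1, 0, 0), (0, u, v, 1), (0, v, −u, 0), (0, 2(u²+v²), 0, 0), let C(u,v) = exp(N(u,v)), and let A = Ω(1,2π/3). Then det C(u,v) = 1, A³ = I, (A·C(u,v))³ = I, and (A²·C(u,v))³ = I; consequently there exists a group homomorphism Ψ_{(u,v)} : Γ → SL(4,ℝ) with Ψ_{(u,v)}(a) = A and Ψ_{(u,v)}(a²b) = C(u,v). -/

import Mathlib

open Matrix Real

/-- The relations of the turnover group `Γ = ⟨a, b ∣ a³ = b³ = (ab)³ = 1⟩`. -/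
def turnoverRels : Set (FreeGroup (Fin 2)) :=
  {FreeGroup.of 0 ^ 3, FreeGroup.of 1 ^ 3, (FreeGroup.of 0 * FreeGroup.of 1) ^ 3}

/-- The orbifold fundamental group of the Euclidean turnover `S²(3,3,3)`. -/
abbrev TurnoverGroup : Type := PresentedGroup turnoverRels

/-- The generator `a` of `Γ`. -/
def ga : TurnoverGroup := PresentedGroup.of 0

/-- The generator `b` of `Γ`. -/
def gb : TurnoverGroup := PresentedGroup.of 1

/-- The similarity `Ω(1, 2π/3) = diag(1, R, 1)` with `R` the rotation of angle `2π/3`. -/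
noncomputable def Omega : Matrix (Fin 4) (Fin 4) ℝ :=
  !![1, 0, 0, 0;
     0, cos (2 * π / 3), -sin (2 * π / 3), 0;
     0, sin (2 * π / 3), cos (2 * π / 3), 0;
     0, 0, 0, 1]

/-- The tangent-direction matrix `N(u,v)` of the slice family. -/
def Nslice (u v : ℝ) : Matrix (Fin 4) (Fin 4) ℝ :=
  !![0, 1, 0, 0;
     0, u, v, 1;
     0, v, -u, 0;
     0, 2 * (u ^ 2 + v ^ 2), 0, 0]

/-- The slice matrices `C(u,v) = exp(N(u,v))`. -/
noncomputable def Cslice (u v : ℝ) : Matrix (Fin 4) (Fin 4) ℝ :=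
  NormedSpace.exp (Nslice u v)

/-!
Writing `Ω = Ω(1, 2π/3)`, the key is to write `N = Ω⁻¹ P Ω - P` with `P` commuting with `N`.
Then `Ω exp N = Ω exp (Ω⁻¹ P Ω) exp (-P) = exp P · Ω · exp (-P)` is conjugate to `Ω`, so it has
order three. Since `Ω² = Ω⁻¹` is the same kind of rotation with the opposite angle, the same
argument gives `(Ω² C)³ = 1`. Over `ℝ`, `det (Ω C)³ = 1` forces `det C = 1`, and `a ↦ Ω`,
`b ↦ Ω C` respects the relations of `Γ`.
-/

section ExpConj

variable {m 𝔸 : Type*} [Fintype m] [DecidableEq m] [NormedRing 𝔸] [NormedAlgebra ℚ 𝔸]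
  [CompleteSpace 𝔸]

open NormedSpace

theorem Matrix.exp_mul_exp_neg (P : Matrix m m 𝔸) : exp P * exp (-P) = 1 := by
  rw [← exp_add_of_commute _ _ (Commute.refl P).neg_right, add_neg_cancel, NormedSpace.exp_zero]

theorem Matrix.units_mul_exp_eq_conj (U : (Matrix m m 𝔸)ˣ) {P N : Matrix m m 𝔸}
    (hconj : (↑U⁻¹ : Matrix m m 𝔸) * P * U = P + N) (hPN : Commute P N) :
    (U : Matrix m m 𝔸) * exp N = exp P * U * exp (-P) := by
  have hsplit : exp N = exp (P + N) * exp (-P) :=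
    calc exp N = exp (P + N + -P) := by rw [add_neg_cancel_comm]
      _ = exp (P + N) * exp (-P) :=
        exp_add_of_commute _ _ ((Commute.refl P).add_left hPN.symm).neg_right
  rw [hsplit, ← hconj, exp_units_conj', ← mul_assoc, ← mul_assoc, ← mul_assoc,
    Units.mul_inv, one_mul]

theorem Matrix.units_mul_exp_pow_eq_one (U : (Matrix m m 𝔸)ˣ) {P N : Matrix m m 𝔸}
    (hconj : (↑U⁻¹ : Matrix m m 𝔸) * P * U = P + N) (hPN : Commute P N) {n : ℕ}
    (hU : U ^ n = 1) : ((U : Matrix m m 𝔸) * exp N) ^ n = 1 := by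
  let E : (Matrix m m 𝔸)ˣ :=
    ⟨exp P, exp (-P), exp_mul_exp_neg P, by simpa using exp_mul_exp_neg (-P)⟩
  rw [units_mul_exp_eq_conj U hconj hPN]
  simpa [E, ← Units.val_pow_eq_pow_val, hU, exp_mul_exp_neg] using
    Units.conj_pow E (U : Matrix m m 𝔸) n

end ExpConj

-- `(cos, sin) = (-1/2, s/2)`: for `s = ±√3` the rotation by `±2π/3`, and `s ↦ -s` inverts it.
noncomputable def omegaOf (s : ℝ) : Matrix (Fin 4) (Fin 4) ℝ :=
  !![1, 0, 0, 0;
     0, -1 / 2, -s / 2, 0;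
     0, s / 2, -1 / 2, 0;
     0, 0, 0, 1]

-- For `s = ±√3` and `Ω = omegaOf s` this is `(Ω⁻¹ N Ω + 2 Ω N Ω⁻¹) / 3`, which solves
-- `Ω⁻¹ P Ω - P = N` because `N + Ω⁻¹ N Ω + Ω N Ω⁻¹ = 0`.
noncomputable def slicePotential (u v s : ℝ) : Matrix (Fin 4) (Fin 4) ℝ :=
  !![0, -1 / 2, s / 6, 0;
     0, v * s / 6 - u / 2, -v / 2 - u * s / 6, -1 / 2;
     0, -v / 2 - u * s / 6, u / 2 - v * s / 6, s / 6;
     0, -(u ^ 2 + v ^ 2), (u ^ 2 + v ^ 2) * s / 3, 0]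

theorem Omega_eq_omegaOf_sqrt_three : Omega = omegaOf √3 := by
  have h : 2 * π / 3 = π - π / 3 := by ring
  rw [Omega, omegaOf, h, cos_pi_sub, sin_pi_sub, cos_pi_div_three, sin_pi_div_three]
  ring_nf

theorem omegaOf_mul_omegaOf_neg {s : ℝ} (hs : s ^ 2 = 3) : omegaOf s * omegaOf (-s) = 1 := by
  ext i j
  fin_cases i <;> fin_cases j <;> simp [omegaOf, mul_apply, Fin.sum_univ_four] <;> grind

theorem omegaOf_neg_mul_omegaOf {s : ℝ} (hs : s ^ 2 = 3) : omegaOf (-s) * omegaOf s = 1 := by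
  simpa using omegaOf_mul_omegaOf_neg (s := -s) (by rwa [neg_sq])

theorem omegaOf_mul_self {s : ℝ} (hs : s ^ 2 = 3) : omegaOf s * omegaOf s = omegaOf (-s) := by
  ext i j
  fin_cases i <;> fin_cases j <;> simp [omegaOf, mul_apply, Fin.sum_univ_four] <;> grind

theorem det_omegaOf {s : ℝ} (hs : s ^ 2 = 3) : (omegaOf s).det = 1 := by
  simp [omegaOf, det_succ_row_zero, Fin.sum_univ_succ]
  grind

theorem commute_slicePotential_Nslice (u v s : ℝ) :
    Commute (slicePotential u v s) (Nslice u v) := by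
  ext i j
  fin_cases i <;> fin_cases j <;>
    simp [slicePotential, Nslice, mul_apply, Fin.sum_univ_four] <;> ring

theorem omegaOf_mul_slicePotential_add_Nslice (u v : ℝ) {s : ℝ} (hs : s ^ 2 = 3) :
    omegaOf s * (slicePotential u v s + Nslice u v) = slicePotential u v s * omegaOf s := by
  ext i j
  fin_cases i <;> fin_cases j <;>
    simp [omegaOf, slicePotential, Nslice, mul_apply, Fin.sum_univ_four] <;> grind

theorem slicePotential_conj_omegaOf (u v : ℝ) {s : ℝ} (hs : s ^ 2 = 3) :
    omegaOf (-s) * slicePotential u v s * omegaOf s = slicePotential u v s + Nslice u v := by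
  rw [mul_assoc, ← omegaOf_mul_slicePotential_add_Nslice u v hs, ← mul_assoc,
    omegaOf_neg_mul_omegaOf hs, one_mul]

noncomputable def omegaOfUnit {s : ℝ} (hs : s ^ 2 = 3) : (Matrix (Fin 4) (Fin 4) ℝ)ˣ :=
  ⟨omegaOf s, omegaOf (-s), omegaOf_mul_omegaOf_neg hs, omegaOf_neg_mul_omegaOf hs⟩

theorem omegaOf_pow_three {s : ℝ} (hs : s ^ 2 = 3) : omegaOf s ^ 3 = 1 := by
  rw [pow_succ, sq, omegaOf_mul_self hs, omegaOf_neg_mul_omegaOf hs]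

theorem omegaOf_mul_Cslice_pow_three (u v : ℝ) {s : ℝ} (hs : s ^ 2 = 3) :
    (omegaOf s * Cslice u v) ^ 3 = 1 :=
  Matrix.units_mul_exp_pow_eq_one (omegaOfUnit hs) (slicePotential_conj_omegaOf u v hs)
    (commute_slicePotential_Nslice u v s) (Units.ext (omegaOf_pow_three hs))

namespace TurnoverGroup

variable {G : Type*} [Group G] (x y : G) (hx : x ^ 3 = 1) (hy : y ^ 3 = 1)
  (hxy : (x * y) ^ 3 = 1)

def lift : TurnoverGroup →* G :=
  PresentedGroup.toGroup (f := ![x, y]) (by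
    simp only [turnoverRels, Set.mem_insert_iff, Set.mem_singleton_iff]
    rintro r (rfl | rfl | rfl) <;> simpa)

theorem lift_ga : lift x y hx hy hxy ga = x := PresentedGroup.toGroup.of _

theorem lift_gb : lift x y hx hy hxy gb = y := PresentedGroup.toGroup.of _

end TurnoverGroup

theorem exists_turnoverGroup_hom_specialLinearGroup {n : Type*} [Fintype n] [DecidableEq n]
    {R : Type*} [CommRing R] {A C : Matrix n n R} (hdetA : A.det = 1) (hdetC : C.det = 1)
    (hA : A ^ 3 = 1) (hAC : (A * C) ^ 3 = 1) (hA2C : (A ^ 2 * C) ^ 3 = 1) :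
    ∃ Ψ : TurnoverGroup →* SpecialLinearGroup n R,
      (Ψ ga : Matrix n n R) = A ∧ (Ψ (ga ^ 2 * gb) : Matrix n n R) = C := by
  have hSL (X : SpecialLinearGroup n R) (hX : (X : Matrix n n R) ^ 3 = 1) : X ^ 3 = 1 :=
    Subtype.ext (by simpa using hX)
  obtain ⟨a, ha⟩ : ∃ a : SpecialLinearGroup n R, (a : Matrix n n R) = A := ⟨⟨A, hdetA⟩, rfl⟩
  obtain ⟨b, hb⟩ : ∃ b : SpecialLinearGroup n R, (b : Matrix n n R) = A * C :=
    ⟨⟨A * C, by rw [det_mul, hdetA, hdetC, one_mul]⟩, rfl⟩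
  have hab : (a * b) ^ 3 = 1 := hSL _ (by simpa [ha, hb, ← mul_assoc, ← sq] using hA2C)
  refine ⟨TurnoverGroup.lift a b (hSL a (ha ▸ hA)) (hSL b (hb ▸ hAC)) hab,
    by rw [TurnoverGroup.lift_ga, ha], ?_⟩
  rw [map_mul, map_pow, TurnoverGroup.lift_ga, TurnoverGroup.lift_gb]
  simp [ha, hb, ← mul_assoc, ← pow_succ, hA]

/-- For every `(u,v) ∈ ℝ²`, with `A = Ω(1, 2π/3)` and `C(u,v) = exp(N(u,v))`, one has
`det C(u,v) = 1`, `A³ = I`, `(A C(u,v))³ = I` and `(A² C(u,v))³ = I`; consequently there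
is a group homomorphism `Ψ₍u,v₎ : Γ → SL(4,ℝ)` with `Ψ₍u,v₎(a) = A` and
`Ψ₍u,v₎(a²b) = C(u,v)`. -/
theorem slice_representations (u v : ℝ) :
    (Cslice u v).det = 1 ∧
      Omega ^ 3 = 1 ∧
      (Omega * Cslice u v) ^ 3 = 1 ∧
      (Omega ^ 2 * Cslice u v) ^ 3 = 1 ∧
      ∃ Ψ : TurnoverGroup →* Matrix.SpecialLinearGroup (Fin 4) ℝ,
        (Ψ ga : Matrix (Fin 4) (Fin 4) ℝ) = Omega ∧
        (Ψ (ga ^ 2 * gb) : Matrix (Fin 4) (Fin 4) ℝ) = Cslice u v := by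
  have hs : √3 ^ 2 = 3 := sq_sqrt (by norm_num)
  have hΩ : Omega = omegaOf √3 := Omega_eq_omegaOf_sqrt_three
  have hΩ3 : Omega ^ 3 = 1 := hΩ ▸ omegaOf_pow_three hs
  have hΩC : (Omega * Cslice u v) ^ 3 = 1 := hΩ ▸ omegaOf_mul_Cslice_pow_three u v hs
  have hΩ2C : (Omega ^ 2 * Cslice u v) ^ 3 = 1 := by
    rw [hΩ, sq, omegaOf_mul_self hs]
    exact omegaOf_mul_Cslice_pow_three u v (by rwa [neg_sq])
  have hdetΩ : Omega.det = 1 := hΩ ▸ det_omegaOf hs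
  have hdetC : (Cslice u v).det = 1 := by
    have h := congrArg det hΩC
    rw [det_pow, det_mul, hdetΩ, one_mul, det_one, ← one_pow 3] at h
    exact (Odd.pow_inj (by decide)).1 h
  exact ⟨hdetC, hΩ3, hΩC, hΩ2C,
    exists_turnoverGroup_hom_specialLinearGroup hdetΩ hdetC hΩ3 hΩC hΩ2C⟩
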